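/- arXiv:1805.07816 — 8 statements merged into one kernel-verified Lean document; each statement's English description precedes it below -/
import Mathlib

section
/- (Local certificate.) Let C be a finite nonempty codebook in a metric space X, let ε ≥ 0, let T : X^d → X^d apply a nearest-code discretization coordinatewise, let Y be any set of labels, and let F : X^d → Y be any function. For an image x ∈ X^d and label y ∈ Y: if F(w) = y for every w ∈ S(x) = ∏_{i=1}^d C(x_i), then F(T(z)) = y for every z ∈ X^d with dist_∞(z, x) ≤ ε; i.e., the indicator I_F(x, y) implies the robustness predicate R_ε(x, y) for the classifier F ∘ T. -/
theorem dist_le_sInf_image_dist_add_two_mul_dist {X : Type*} [PseudoMetricSpace X] {C : Set X}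
    {p p' c₀ : X} (hc₀ : c₀ ∈ C) (hnear : ∀ c ∈ C, dist p c₀ ≤ dist p c) :
    dist p' c₀ ≤ sInf (dist p' '' C) + 2 * dist p p' := by
  have hlower : dist p' c₀ - 2 * dist p p' ≤ sInf (dist p' '' C) := by
    refine le_csInf ⟨_, c₀, hc₀, rfl⟩ ?_
    rintro _ ⟨c, hc, rfl⟩
    linarith [dist_triangle p' p c₀, dist_triangle p p' c, hnear c hc, dist_comm p p']
  linarith

theorem local_certificate_general
    {X Y : Type*} [MetricSpace X] {d : ℕ} (C : Set X)
    (ε : ℝ)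
    (t : X → X) (ht_mem : ∀ p : X, t p ∈ C)
    (ht_near : ∀ p : X, ∀ c ∈ C, dist p (t p) ≤ dist p c)
    (T : (Fin d → X) → Fin d → X) (hT : ∀ z i, T z i = t (z i))
    (F : (Fin d → X) → Y) (x : Fin d → X) (y : Y)
    (hcert : ∀ w : Fin d → X,
      (∀ i : Fin d, w i ∈ {c ∈ C | dist (x i) c ≤ sInf (dist (x i) '' C) + 2 * ε}) → F w = y) :
    ∀ z : Fin d → X, dist z x ≤ ε → F (T z) = y := by
  intro z hz
  refine hcert _ fun i => ⟨hT z i ▸ ht_mem (z i), ?_⟩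
  have hzi : dist (z i) (x i) ≤ ε := (dist_le_pi_dist z x i).trans hz
  rw [hT]
  linarith [dist_le_sInf_image_dist_add_two_mul_dist (p' := x i) (ht_mem (z i)) (ht_near (z i))]

/-- **Local certificate.** If the classifier `F` outputs `y` on every element of
`S(x) = ∏ᵢ C(xᵢ)`, where `C(p) = {c ∈ C : dist p c ≤ d*(p) + 2ε}` with
`d*(p) = inf_{c ∈ C} dist p c`, then `F (T z) = y` for every `z` with `dist_∞ z x ≤ ε`;
i.e. the indicator `I_F(x, y)` implies the robustness predicate `R_ε(x, y)` for `F ∘ T`. -/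
theorem local_certificate
    {X Y : Type*} [MetricSpace X] {d : ℕ} (C : Set X) (hCfin : C.Finite) (hCne : C.Nonempty)
    (ε : ℝ) (hε : 0 ≤ ε)
    (t : X → X) (ht_mem : ∀ p : X, t p ∈ C)
    (ht_near : ∀ p : X, ∀ c ∈ C, dist p (t p) ≤ dist p c)
    (T : (Fin d → X) → Fin d → X) (hT : ∀ z i, T z i = t (z i))
    (F : (Fin d → X) → Y) (x : Fin d → X) (y : Y)
    (hcert : ∀ w : Fin d → X,
      (∀ i : Fin d, w i ∈ {c ∈ C | dist (x i) c ≤ sInf (dist (x i) '' C) + 2 * ε}) → F w = y) :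
    ∀ z : Fin d → X, dist z x ≤ ε → F (T z) = y :=
  local_certificate_general C ε t ht_mem ht_near T hT F x y hcert
end

section
/- (Global certificate.) Let C be a finite nonempty codebook in a metric space X, let ε ≥ 0, let T : X^d → X^d apply a nearest-code discretization coordinatewise, let F : X^d → Y be a function, and let μ be a probability measure on X^d × Y for which the relevant sets below are measurable. Then μ{(x, y) : F(w) = y for all w ∈ S(x)} ≤ μ{(x, y) : F(T(z)) = y for all z with dist_∞(z, x) ≤ ε}; that is, the expectation s = E_μ[I_F(x, y)] is a lower bound on the robustness accuracy of F ∘ T under adversarial budget ε. -/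
open MeasureTheory

/-! If `dist_∞(z, x) ≤ ε`, then for every `c ∈ C` the triangle inequality gives
`dist(xᵢ, t(zᵢ)) ≤ ε + dist(zᵢ, t(zᵢ)) ≤ ε + dist(zᵢ, c) ≤ 2ε + dist(xᵢ, c)`, so `t(zᵢ) ∈ C(xᵢ)`.
Hence `T(z) ∈ S(x)`: the certified event is contained in the robust event, and no measurability
is needed for monotonicity of the measure. -/

theorem dist_le_sInf_dist_add_of_isNearest {X : Type*} [PseudoMetricSpace X] {C : Set X}
    {x z q : X} {ε : ℝ} (hq : q ∈ C) (hnear : ∀ c ∈ C, dist z q ≤ dist z c)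
    (hz : dist z x ≤ ε) : dist x q ≤ sInf (dist x '' C) + 2 * ε := by
  rw [← sub_le_iff_le_add]
  refine le_csInf (Set.Nonempty.image _ ⟨q, hq⟩) ?_
  rintro _ ⟨c, hc, rfl⟩
  calc dist x q - 2 * ε ≤ dist x z + dist z q - 2 * ε := by gcongr; exact dist_triangle _ _ _
    _ ≤ dist z x + dist z c - 2 * ε := by rw [dist_comm x z]; linarith [hnear c hc]
    _ ≤ dist x c := by linarith [dist_triangle z x c]

theorem global_certificate_general
    {X Y : Type*} [MetricSpace X] [MeasurableSpace X] [MeasurableSpace Y] {d : ℕ}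
    (C : Set X)
    (ε : ℝ)
    (t : X → X) (ht_mem : ∀ p : X, t p ∈ C)
    (ht_near : ∀ p : X, ∀ c ∈ C, dist p (t p) ≤ dist p c)
    (T : (Fin d → X) → Fin d → X) (hT : ∀ z i, T z i = t (z i))
    (F : (Fin d → X) → Y)
    (μ : Measure ((Fin d → X) × Y)) :
    μ {p : (Fin d → X) × Y | ∀ w : Fin d → X,
        (∀ i : Fin d, w i ∈ {c ∈ C | dist (p.1 i) c ≤ sInf (dist (p.1 i) '' C) + 2 * ε}) →
          F w = p.2}
      ≤ μ {p : (Fin d → X) × Y | ∀ z : Fin d → X, dist z p.1 ≤ ε → F (T z) = p.2} := by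
  refine measure_mono ?_
  rintro ⟨x, y⟩ hcertified z hz
  refine hcertified (T z) fun i => ?_
  rw [hT]
  exact ⟨ht_mem (z i), dist_le_sInf_dist_add_of_isNearest (ht_mem (z i)) (ht_near (z i))
    ((dist_le_pi_dist z x i).trans hz)⟩

/-- **Global certificate.** The probability (under `μ`) that `F` is constantly `y`
on `S(x) = ∏ᵢ C(xᵢ)` is a lower bound on the robustness accuracy of `F ∘ T` under adversarial
budget `ε`, where `C(p) = {c ∈ C : dist p c ≤ d*(p) + 2ε}`, `d*(p) = inf_{c ∈ C} dist p c`,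
and `T` applies the nearest-code discretization `t` coordinatewise. -/
theorem global_certificate
    {X Y : Type*} [MetricSpace X] [MeasurableSpace X] [MeasurableSpace Y] {d : ℕ}
    (C : Set X) (hCfin : C.Finite) (hCne : C.Nonempty)
    (ε : ℝ) (hε : 0 ≤ ε)
    (t : X → X) (ht_mem : ∀ p : X, t p ∈ C)
    (ht_near : ∀ p : X, ∀ c ∈ C, dist p (t p) ≤ dist p c)
    (T : (Fin d → X) → Fin d → X) (hT : ∀ z i, T z i = t (z i))
    (F : (Fin d → X) → Y)
    (μ : Measure ((Fin d → X) × Y)) [IsProbabilityMeasure μ]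
    (hmeasA : MeasurableSet {p : (Fin d → X) × Y | ∀ w : Fin d → X,
      (∀ i : Fin d, w i ∈ {c ∈ C | dist (p.1 i) c ≤ sInf (dist (p.1 i) '' C) + 2 * ε}) →
        F w = p.2})
    (hmeasB : MeasurableSet {p : (Fin d → X) × Y | ∀ z : Fin d → X,
      dist z p.1 ≤ ε → F (T z) = p.2}) :
    μ {p : (Fin d → X) × Y | ∀ w : Fin d → X,
        (∀ i : Fin d, w i ∈ {c ∈ C | dist (p.1 i) c ≤ sInf (dist (p.1 i) '' C) + 2 * ε}) →
          F w = p.2}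
      ≤ μ {p : (Fin d → X) × Y | ∀ z : Fin d → X, dist z p.1 ≤ ε → F (T z) = p.2} :=
  global_certificate_general C ε t ht_mem ht_near T hT F μ
end

section
/- (Proposition 2, certified robustness from samples.) Let C be a finite nonempty codebook in a metric space X, ε ≥ 0, T : X^d → X^d the coordinatewise nearest-code preprocessor, F : X^d → Y measurable, and μ a probability measure on X^d × Y for which the relevant sets are measurable. Let (X⁽¹⁾, Y⁽¹⁾), …, (X⁽ᵐ⁾, Y⁽ᵐ⁾) be i.i.d. samples from μ and let ŝ = (1/m) · #{i ≤ m : F(w) = Y⁽ⁱ⁾ for all w ∈ S(X⁽ⁱ⁾)}. Then for every δ ∈ (0, 1), with probability at least 1 − δ over the samples, the robustness accuracy satisfies μ{(x, y) : F(T(z)) = y for all z with dist_∞(z, x) ≤ ε} ≥ ŝ − √((1/(2m)) · log(1/δ)). -/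
/-!
If a labelled image `(x, y)` is certified, i.e. `F ≡ y` on `S(x)`, then it is robust: for `z`
within `ε` of `x`, the triangle inequality (used twice, around `x` and around the nearest code of
`z`) puts each `t(zᵢ)` within `d*(xᵢ) + 2ε` of `xᵢ`, so `T z ∈ S(x)`. Hence the robustness
accuracy is at least `q = μ(certified)`. The certification indicators of the samples are i.i.d.
Bernoulli variables with mean `q`, so by Hoeffding their average exceeds `q + s` with probability
at most `exp(-2ms²)`, which equals `δ` for the chosen `s`.
-/

open MeasureTheory Finset
open scoped Classical

section Discretization

variable {X : Type*} [PseudoMetricSpace X]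

def candidateSet (C : Set X) (ε : ℝ) (p : X) : Set X :=
  {c ∈ C | dist p c ≤ sInf (dist p '' C) + 2 * ε}

theorem nearest_mem_candidateSet {C : Set X} {t : X → X} (ht_mem : ∀ p, t p ∈ C)
    (ht_near : ∀ p, ∀ c ∈ C, dist p (t p) ≤ dist p c) {ε : ℝ} {x z : X}
    (hz : dist z x ≤ ε) :
    t z ∈ candidateSet C ε x := by
  refine ⟨ht_mem z, sub_le_iff_le_add.1 <|
    le_csInf (Set.Nonempty.image _ ⟨t z, ht_mem z⟩) ?_⟩
  rintro _ ⟨c, hc, rfl⟩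
  have : dist x (t z) ≤ dist x c + 2 * ε := calc
    dist x (t z) ≤ dist x z + dist z (t z) := dist_triangle x z (t z)
    _ ≤ ε + dist z c := add_le_add (dist_comm x z ▸ hz) (ht_near z c hc)
    _ ≤ ε + (dist z x + dist x c) := by grw [dist_triangle z x c]
    _ ≤ dist x c + 2 * ε := by linarith
  linarith

variable {ι Y : Type*}

def certifiedSet (C : Set X) (ε : ℝ) (F : (ι → X) → Y) : Set ((ι → X) × Y) :=
  {p | ∀ w : ι → X, (∀ i, w i ∈ candidateSet C ε (p.1 i)) → F w = p.2}

def robustSet [Fintype ι] (T : (ι → X) → ι → X) (ε : ℝ) (F : (ι → X) → Y) :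
    Set ((ι → X) × Y) :=
  {p | ∀ z : ι → X, dist z p.1 ≤ ε → F (T z) = p.2}

theorem certifiedSet_subset_robustSet [Fintype ι] {C : Set X} {t : X → X}
    (ht_mem : ∀ p, t p ∈ C) (ht_near : ∀ p, ∀ c ∈ C, dist p (t p) ≤ dist p c)
    {T : (ι → X) → ι → X}
    (hT : ∀ z i, T z i = t (z i)) (ε : ℝ) (F : (ι → X) → Y) :
    certifiedSet C ε F ⊆ robustSet T ε F := fun p hp z hz =>
  hp (T z) fun i => hT z i ▸
    nearest_mem_candidateSet ht_mem ht_near ((dist_le_pi_dist z p.1 i).trans hz)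

end Discretization

section Hoeffding

open ProbabilityTheory Real

variable {E Ω ι : Type*} [MeasurableSpace E] [MeasurableSpace Ω] [Fintype ι]
  {P : Measure Ω} [IsProbabilityMeasure P] {μ : Measure E} {W : ι → Ω → E}
  {A : Set E}

theorem measureReal_card_mem_ge_le (hW : ∀ i, Measurable (W i)) (hlaw : ∀ i, P.map (W i) = μ)
    (hindep : iIndepFun W P) (hA : MeasurableSet A) {s : ℝ} (hs : 0 ≤ s) :
    P.real {ω | Fintype.card ι * (μ.real A + s) ≤ #{i | W i ω ∈ A}} ≤
      exp (-2 * Fintype.card ι * s ^ 2) := by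
  set Z : ι → Ω → ℝ := fun i ω => A.indicator 1 (W i ω)
  have hZ : ∀ i, Measurable (Z i) := fun i => (measurable_one.indicator hA).comp (hW i)
  have hmean : ∀ i, P[Z i] = μ.real A := fun i => by
    rw [← integral_indicator_one hA, ← hlaw i,
      integral_map (hW i).aemeasurable (measurable_one.indicator hA).aestronglyMeasurable]
  have hsubG : ∀ i ∈ (univ : Finset ι),
      HasSubgaussianMGF (fun ω => Z i ω - μ.real A) ((‖(1 : ℝ) - 0‖₊ / 2) ^ 2) P := by
    intro i _
    rw [← hmean i]
    refine hasSubgaussianMGF_of_mem_Icc (hZ i).aemeasurable (ae_of_all _ fun ω => ?_)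
    by_cases h : W i ω ∈ A <;> simp [Z, h]
  have hindepZ : iIndepFun (fun i ω => Z i ω - μ.real A) P :=
    hindep.comp (fun _ p => A.indicator 1 p - μ.real A)
      fun _ => (measurable_one.indicator hA).sub_const _
  have hoeffding := HasSubgaussianMGF.measure_sum_ge_le_of_iIndepFun hindepZ hsubG
    (ε := Fintype.card ι * s) (by positivity)
  have hsum : ∀ ω,
      ∑ i, (Z i ω - μ.real A) = #{i | W i ω ∈ A} - Fintype.card ι * μ.real A := by
    intro ω
    simp [Z, sum_sub_distrib, Set.indicator_apply, sum_boole]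
  convert hoeffding using 2
  · ext ω
    simp only [Set.mem_ofPred_eq, hsum]
    constructor <;> intro h <;> linarith
  · rcases (Fintype.card ι).eq_zero_or_pos with h | h
    · simp [h]
    · simp only [neg_mul, sub_zero, nnnorm_one, one_div, inv_pow, sum_const, card_univ,
        nsmul_eq_mul, NNReal.coe_mul, NNReal.coe_natCast, NNReal.coe_inv, NNReal.coe_pow,
        NNReal.coe_ofNat]
      field_simp

theorem ofReal_one_sub_exp_le_measure_card_mem_lt (hW : ∀ i, Measurable (W i))
    (hlaw : ∀ i, P.map (W i) = μ) (hindep : iIndepFun W P) (hA : MeasurableSet A) {s : ℝ}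
    (hs : 0 ≤ s) :
    ENNReal.ofReal (1 - exp (-2 * Fintype.card ι * s ^ 2)) ≤
      P {ω | #{i | W i ω ∈ A} < Fintype.card ι * (μ.real A + s)} := by
  set E := {ω | Fintype.card ι * (μ.real A + s) ≤ #{i | W i ω ∈ A}}
  have hE : P E ≤ ENNReal.ofReal (exp (-2 * Fintype.card ι * s ^ 2)) :=
    (ENNReal.le_ofReal_iff_toReal_le (measure_ne_top _ _) (exp_pos _).le).2
      (measureReal_card_mem_ge_le hW hlaw hindep hA hs)
  calc ENNReal.ofReal (1 - exp (-2 * Fintype.card ι * s ^ 2))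
      = 1 - ENNReal.ofReal (exp (-2 * Fintype.card ι * s ^ 2)) := by
        rw [ENNReal.ofReal_sub _ (exp_pos _).le, ENNReal.ofReal_one]
    _ ≤ 1 - P E := by gcongr
    _ ≤ P Eᶜ := by
        rw [tsub_le_iff_right, add_comm, ← measure_univ (μ := P)]
        exact measure_univ_le_add_compl E
    _ = P {ω | #{i | W i ω ∈ A} < Fintype.card ι * (μ.real A + s)} := by
        simp only [E, Set.compl_ofPred, not_le]

end Hoeffding

theorem certified_robustness_from_samples_general
    {X Y : Type*} [MetricSpace X] [MeasurableSpace X] [MeasurableSpace Y] {d : ℕ}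
    (C : Set X)
    (ε : ℝ)
    (t : X → X) (ht_mem : ∀ p : X, t p ∈ C)
    (ht_near : ∀ p : X, ∀ c ∈ C, dist p (t p) ≤ dist p c)
    (T : (Fin d → X) → Fin d → X) (hT : ∀ z i, T z i = t (z i))
    (F : (Fin d → X) → Y)
    (μ : Measure ((Fin d → X) × Y)) [IsProbabilityMeasure μ]
    (hmeasA : MeasurableSet {p : (Fin d → X) × Y | ∀ w : Fin d → X,
      (∀ i : Fin d, w i ∈ {c ∈ C | dist (p.1 i) c ≤ sInf (dist (p.1 i) '' C) + 2 * ε}) →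
        F w = p.2})
    {Ω : Type*} [MeasurableSpace Ω] (P : Measure Ω) [IsProbabilityMeasure P]
    {m : ℕ} (hm : 0 < m)
    (W : Fin m → Ω → (Fin d → X) × Y)
    (hWmeas : ∀ i, Measurable (W i))
    (hWlaw : ∀ i, Measure.map (W i) P = μ)
    (hWindep : ProbabilityTheory.iIndepFun W P)
    (δ : ℝ) (hδ0 : 0 < δ) (hδ1 : δ < 1) :
    P {ω : Ω |
        ((Finset.univ.filter (fun i : Fin m => ∀ w : Fin d → X,
            (∀ j : Fin d, w j ∈ {c ∈ C |
              dist ((W i ω).1 j) c ≤ sInf (dist ((W i ω).1 j) '' C) + 2 * ε}) →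
            F w = (W i ω).2)).card : ℝ) / m
          - Real.sqrt ((1 / (2 * m)) * Real.log (1 / δ))
        ≤ (μ {p : (Fin d → X) × Y | ∀ z : Fin d → X,
              dist z p.1 ≤ ε → F (T z) = p.2}).toReal}
      ≥ ENNReal.ofReal (1 - δ) := by
  have hm' : (0 : ℝ) < m := Nat.cast_pos.2 hm
  set s := Real.sqrt ((1 / (2 * m)) * Real.log (1 / δ)) with hs
  have hexp : Real.exp (-2 * m * s ^ 2) = δ := by
    have hlog : 0 ≤ Real.log (1 / δ) := Real.log_nonneg (one_le_one_div hδ0 hδ1.le)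
    rw [hs, Real.sq_sqrt (by positivity), one_div δ, Real.log_inv]
    rw [show -2 * (m : ℝ) * (1 / (2 * m) * -Real.log δ) = Real.log δ by field_simp]
    exact Real.exp_log hδ0
  have hcert : μ.real (certifiedSet C ε F) ≤ μ.real (robustSet T ε F) :=
    measureReal_mono (certifiedSet_subset_robustSet ht_mem ht_near hT ε F)
  have hsample := ofReal_one_sub_exp_le_measure_card_mem_lt hWmeas hWlaw hWindep
    (A := certifiedSet C ε F) hmeasA (Real.sqrt_nonneg _) (s := s)
  rw [Fintype.card_fin, hexp] at hsample
  show P {ω | (#{i | W i ω ∈ certifiedSet C ε F} : ℝ) / m - s ≤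
    μ.real (robustSet T ε F)} ≥ _
  refine hsample.trans (measure_mono fun ω hω => ?_)
  have hlt := (div_lt_iff₀' hm').2 hω.out
  rw [Set.mem_ofPred_eq]
  linarith

/-- **Proposition 2: certified robustness from samples.** Given i.i.d. samples
`W 1, …, W m` from `μ`, let `ŝ` be the fraction of samples `(x, y)` on which `F` is constantly
`y` on `S(x) = ∏ᵢ C(xᵢ)`. Then with probability at least `1 − δ` over the samples, the
robustness accuracy of `F ∘ T` with budget `ε` is at least `ŝ − √((1/(2m))·log(1/δ))`. -/
theorem certified_robustness_from_samples
    {X Y : Type*} [MetricSpace X] [MeasurableSpace X] [MeasurableSpace Y] {d : ℕ}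
    (C : Set X) (hCfin : C.Finite) (hCne : C.Nonempty)
    (ε : ℝ) (hε : 0 ≤ ε)
    (t : X → X) (ht_mem : ∀ p : X, t p ∈ C)
    (ht_near : ∀ p : X, ∀ c ∈ C, dist p (t p) ≤ dist p c)
    (T : (Fin d → X) → Fin d → X) (hT : ∀ z i, T z i = t (z i))
    (F : (Fin d → X) → Y) (hF : Measurable F)
    (μ : Measure ((Fin d → X) × Y)) [IsProbabilityMeasure μ]
    (hmeasA : MeasurableSet {p : (Fin d → X) × Y | ∀ w : Fin d → X,
      (∀ i : Fin d, w i ∈ {c ∈ C | dist (p.1 i) c ≤ sInf (dist (p.1 i) '' C) + 2 * ε}) →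
        F w = p.2})
    {Ω : Type*} [MeasurableSpace Ω] (P : Measure Ω) [IsProbabilityMeasure P]
    {m : ℕ} (hm : 0 < m)
    (W : Fin m → Ω → (Fin d → X) × Y)
    (hWmeas : ∀ i, Measurable (W i))
    (hWlaw : ∀ i, Measure.map (W i) P = μ)
    (hWindep : ProbabilityTheory.iIndepFun W P)
    (δ : ℝ) (hδ0 : 0 < δ) (hδ1 : δ < 1) :
    P {ω : Ω |
        ((Finset.univ.filter (fun i : Fin m => ∀ w : Fin d → X,
            (∀ j : Fin d, w j ∈ {c ∈ C |
              dist ((W i ω).1 j) c ≤ sInf (dist ((W i ω).1 j) '' C) + 2 * ε}) →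
            F w = (W i ω).2)).card : ℝ) / m
          - Real.sqrt ((1 / (2 * m)) * Real.log (1 / δ))
        ≤ (μ {p : (Fin d → X) × Y | ∀ z : Fin d → X,
              dist z p.1 ≤ ε → F (T z) = p.2}).toReal}
      ≥ ENNReal.ofReal (1 - δ) :=
  certified_robustness_from_samples_general C ε t ht_mem ht_near T hT F μ hmeasA P hm W hWmeas hWlaw
    hWindep δ hδ0 hδ1
end

section
/- (Per-pixel correctness under the idealized model.) Let X be a metric space, let c*₁, …, c*ₖ ∈ X satisfy dist(c*_i, c*_j) ≥ Γ for all i ≠ j, and let c₁, …, cₖ be a ν-approximation of c*₁, …, c*ₖ (dist(c_i, c*_i) ≤ ν for all i), with ν ≥ 0 and Γ > 16ν. Let x ∈ X satisfy dist(x, c*_j) ≤ Γ/8 for some index j. Then for every z ∈ X with dist(z, x) ≤ 5ν, one has dist(z, c_j) < dist(z, c_l) for every l ≠ j; hence any nearest-code discretization with codebook {c₁, …, cₖ} maps z to c_j. -/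
/-!
A point `z` with `dist z x ≤ 5ν` lies within `ρ = 5ν + Γ/8` of `c*_j`. Moving each true codeword by at
most `ν`, `z` is within `ρ + ν` of `c_j` and, by separation, at least `Γ - ρ - ν` from every other
`c_l`; the margin `2(ρ + ν) < Γ` is exactly `16ν < Γ`.
-/

theorem dist_lt_dist_of_near_of_separated {X : Type*} [PseudoMetricSpace X]
    {z a b a' b' : X} {ρ ν R : ℝ} (hz : dist z a' ≤ ρ) (ha : dist a a' ≤ ν)
    (hb : dist b b' ≤ ν) (hsep : R ≤ dist a' b') (hR : 2 * (ρ + ν) < R) :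
    dist z a < dist z b := by
  have hza : dist z a ≤ ρ + ν := by
    calc dist z a ≤ dist z a' + dist a a' := dist_triangle_right z a a'
      _ ≤ ρ + ν := add_le_add hz ha
  have hzb : R - ρ - ν ≤ dist z b := by
    have := dist_triangle4 a' z b b'
    rw [dist_comm a' z] at this
    linarith
  linarith

theorem eq_of_dist_le_of_forall_dist_lt {ι X : Type*} [PseudoMetricSpace X] {c : ι → X}
    {z y : X} {j : ι} (hy : ∃ i, y = c i) (hmin : dist z y ≤ dist z (c j))
    (hstrict : ∀ l, l ≠ j → dist z (c j) < dist z (c l)) : y = c j := by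
  obtain ⟨i, rfl⟩ := hy
  by_contra hne
  exact (hstrict i (ne_of_apply_ne c hne)).not_ge hmin

theorem per_pixel_correctness_idealized_general
    {X : Type*} [MetricSpace X] {k : ℕ} (cs c : Fin k → X)
    (Γ ν : ℝ) (hΓ : 16 * ν < Γ)
    (hsep : ∀ i j : Fin k, i ≠ j → Γ ≤ dist (cs i) (cs j))
    (happrox : ∀ i : Fin k, dist (c i) (cs i) ≤ ν)
    (x : X) (j : Fin k) (hx : dist x (cs j) ≤ Γ / 8) :
    ∀ z : X, dist z x ≤ 5 * ν →
      (∀ l : Fin k, l ≠ j → dist z (c j) < dist z (c l)) ∧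
      (∀ t : X → X, (∀ p : X, ∃ i : Fin k, t p = c i) →
        (∀ (p : X) (i : Fin k), dist p (t p) ≤ dist p (c i)) →
        t z = c j) := by
  intro z hz
  have hzj : dist z (cs j) ≤ 5 * ν + Γ / 8 :=
    (dist_triangle z x (cs j)).trans (add_le_add hz hx)
  have hnear : ∀ l, l ≠ j → dist z (c j) < dist z (c l) := fun l hl =>
    dist_lt_dist_of_near_of_separated hzj (happrox j) (happrox l) (hsep j l hl.symm)
      (by linarith)
  exact ⟨hnear, fun t hcode hnearest =>
    eq_of_dist_le_of_forall_dist_lt (hcode z) (hnearest z j) hnear⟩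

/-- **Per-pixel correctness under the idealized model.** If the ground-truth
codewords `c*₁, …, c*ₖ` are pairwise `Γ`-separated, `c₁, …, cₖ` is a `ν`-approximation of them
with `Γ > 16ν`, and the pixel `x` satisfies `dist x (c*_j) ≤ Γ/8`, then every `z` with
`dist z x ≤ 5ν` has `c_j` as its strictly unique nearest code, and hence any nearest-code
discretization with codebook `{c₁, …, cₖ}` maps `z` to `c_j`. -/
theorem per_pixel_correctness_idealized
    {X : Type*} [MetricSpace X] {k : ℕ} (cs c : Fin k → X)
    (Γ ν : ℝ) (hν : 0 ≤ ν) (hΓ : 16 * ν < Γ)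
    (hsep : ∀ i j : Fin k, i ≠ j → Γ ≤ dist (cs i) (cs j))
    (happrox : ∀ i : Fin k, dist (c i) (cs i) ≤ ν)
    (x : X) (j : Fin k) (hx : dist x (cs j) ≤ Γ / 8) :
    ∀ z : X, dist z x ≤ 5 * ν →
      (∀ l : Fin k, l ≠ j → dist z (c j) < dist z (c l)) ∧
      (∀ t : X → X, (∀ p : X, ∃ i : Fin k, t p = c i) →
        (∀ (p : X) (i : Fin k), dist p (t p) ≤ dist p (c i)) →
        t z = c j) :=
  per_pixel_correctness_idealized_general cs c Γ ν hΓ hsep happrox x j hx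
end

section
/- (Discretization of a perturbed image equals a code perturbation of its skeleton.) Let X be a metric space, let c*₁, …, c*ₖ ∈ X satisfy dist(c*_i, c*_j) ≥ Γ for all i ≠ j, let c₁, …, cₖ be a ν-approximation of c*₁, …, c*ₖ with ν ≥ 0 and Γ > 16ν, and let T : X^d → X^d be the coordinatewise nearest-code preprocessor for the codebook {c₁, …, cₖ}, breaking ties arbitrarily. Suppose the image x ∈ X^d has a skeleton u ∈ X^d with u_i ∈ {c*₁, …, c*ₖ} and dist(x_i, u_i) ≤ Γ/8 for every coordinate i. Then for every 0 ≤ ε ≤ 5ν and every z ∈ X^d with dist_∞(z, x) ≤ ε, T(z) = Ĝ(u), where Ĝ : X^d → X^d is the coordinatewise map sending c*_i to c_i (for each coordinate whose value is some c*_i). -/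
/-!
Each coordinate `zᵢ` lies within `Γ/8 + 5ν` of its ground-truth codeword `c*_idx`. Any codeword
`c_j` at least as close to `zᵢ` as `c_idx` puts `c*_j` within `Γ/8 + 7ν` of `zᵢ`, so
`dist c*_j c*_idx ≤ Γ/4 + 12ν < Γ`, and separation forces `j = idx`.
-/

section Codebook

variable {ι X : Type*} [PseudoMetricSpace X]

theorem eq_of_dist_le_of_separated {cs : ι → X} {Γ r s : ℝ}
    (hsep : ∀ i j, i ≠ j → Γ ≤ dist (cs i) (cs j)) {p : X} {i j : ι}
    (hi : dist p (cs i) ≤ r) (hj : dist p (cs j) ≤ s) (hrs : r + s < Γ) : i = j := by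
  by_contra hij
  linarith [hsep i j hij, dist_triangle_left (cs i) (cs j) p]

theorem dist_approx_le_of_dist_le {cs c : ι → X} {ν : ℝ}
    (happrox : ∀ i, dist (c i) (cs i) ≤ ν) {p : X} {i j : ι}
    (hnear : dist p (c j) ≤ dist p (c i)) : dist p (cs j) ≤ dist p (cs i) + 2 * ν := by
  linarith [happrox i, happrox j, dist_triangle p (c j) (cs j),
    dist_triangle_right p (c i) (cs i)]

theorem nearest_code_eq_of_dist_le {cs c : ι → X} {Γ ν r : ℝ}
    (hsep : ∀ i j, i ≠ j → Γ ≤ dist (cs i) (cs j)) (happrox : ∀ i, dist (c i) (cs i) ≤ ν)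
    {t : X → X} (ht_mem : ∀ p, ∃ i, t p = c i) (ht_near : ∀ p i, dist p (t p) ≤ dist p (c i))
    {p : X} {i : ι} (hp : dist p (cs i) ≤ r) (hr : 2 * r + 2 * ν < Γ) : t p = c i := by
  obtain ⟨j, hj⟩ := ht_mem p
  have hpj : dist p (cs j) ≤ dist p (cs i) + 2 * ν :=
    dist_approx_le_of_dist_le happrox (hj ▸ ht_near p i)
  rw [hj, eq_of_dist_le_of_separated hsep hpj hp (by linarith)]

end Codebook

theorem discretization_of_perturbed_image_is_code_perturbation_general
    {X : Type*} [MetricSpace X] {d k : ℕ} (cs c : Fin k → X)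
    (Γ ν : ℝ) (hΓ : 16 * ν < Γ)
    (hsep : ∀ i j : Fin k, i ≠ j → Γ ≤ dist (cs i) (cs j))
    (happrox : ∀ i : Fin k, dist (c i) (cs i) ≤ ν)
    (t : X → X) (ht_mem : ∀ p : X, ∃ i : Fin k, t p = c i)
    (ht_near : ∀ (p : X) (i : Fin k), dist p (t p) ≤ dist p (c i))
    (T : (Fin d → X) → Fin d → X) (hT : ∀ z i, T z i = t (z i))
    (x u : Fin d → X)
    (hu : ∀ i : Fin d, (∃ idx : Fin k, u i = cs idx) ∧ dist (x i) (u i) ≤ Γ / 8)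
    (ε : ℝ) (hε : ε ≤ 5 * ν)
    (z : Fin d → X) (hz : dist z x ≤ ε)
    (Ghat : (Fin d → X) → Fin d → X)
    (hGhat : ∀ (w : Fin d → X) (i : Fin d) (idx : Fin k), w i = cs idx → Ghat w i = c idx) :
    T z = Ghat u := by
  funext i
  obtain ⟨⟨idx, hidx⟩, hxu⟩ := hu i
  have hzx : dist (z i) (x i) ≤ ε := (dist_le_pi_dist z x i).trans hz
  have hz_cs : dist (z i) (cs idx) ≤ Γ / 8 + 5 * ν := by
    rw [← hidx]
    linarith [dist_triangle (z i) (x i) (u i)]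
  rw [hT, hGhat u i idx hidx]
  exact nearest_code_eq_of_dist_le hsep happrox ht_mem ht_near hz_cs (by linarith)

/-- **Discretization of a perturbed image equals a code perturbation of the
skeleton.** With `Γ`-separated ground-truth codewords `c*`, a `ν`-approximation `c` with
`Γ > 16ν`, and the coordinatewise nearest-code preprocessor `T` (arbitrary ties) for the
codebook `{c₁, …, cₖ}`: if the image `x` has a skeleton `u` with each `uᵢ` some `c*_idx` and
`dist xᵢ uᵢ ≤ Γ/8`, then for every `0 ≤ ε ≤ 5ν` and every `z` with `dist_∞ z x ≤ ε`,
`T z = Ĝ u`, where `Ĝ` is the coordinatewise map sending `c*_idx` to `c_idx`. -/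
theorem discretization_of_perturbed_image_is_code_perturbation
    {X : Type*} [MetricSpace X] {d k : ℕ} (cs c : Fin k → X)
    (Γ ν : ℝ) (hν : 0 ≤ ν) (hΓ : 16 * ν < Γ)
    (hsep : ∀ i j : Fin k, i ≠ j → Γ ≤ dist (cs i) (cs j))
    (happrox : ∀ i : Fin k, dist (c i) (cs i) ≤ ν)
    (t : X → X) (ht_mem : ∀ p : X, ∃ i : Fin k, t p = c i)
    (ht_near : ∀ (p : X) (i : Fin k), dist p (t p) ≤ dist p (c i))
    (T : (Fin d → X) → Fin d → X) (hT : ∀ z i, T z i = t (z i))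
    (x u : Fin d → X)
    (hu : ∀ i : Fin d, (∃ idx : Fin k, u i = cs idx) ∧ dist (x i) (u i) ≤ Γ / 8)
    (ε : ℝ) (hε0 : 0 ≤ ε) (hε : ε ≤ 5 * ν)
    (z : Fin d → X) (hz : dist z x ≤ ε)
    (Ghat : (Fin d → X) → Fin d → X)
    (hGhat : ∀ (w : Fin d → X) (i : Fin d) (idx : Fin k), w i = cs idx → Ghat w i = c idx) :
    T z = Ghat u :=
  discretization_of_perturbed_image_is_code_perturbation_general cs c Γ ν hΓ hsep happrox t ht_mem
    ht_near T hT x u hu ε hε z hz Ghat hGhat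
end

section
/- (Proposition 1, robustness boost with approximate codewords.) Let X be a metric space, c*₁, …, c*ₖ ∈ X with dist(c*_i, c*_j) ≥ Γ for i ≠ j, and c₁, …, cₖ a ν-approximation of c*₁, …, c*ₖ with ν ≥ 0 and Γ > 16ν. Let T : X^d → X^d be the coordinatewise nearest-code preprocessor for {c₁, …, cₖ}, let F : X^d → Y be any function, let 0 ≤ ε ≤ 5ν, and let μ be a probability measure on triples (x, u, y) ∈ X^d × X^d × Y, with the relevant sets measurable, such that μ-almost surely every coordinate satisfies u_i ∈ {c*₁, …, c*ₖ} and dist(x_i, u_i) ≤ Γ/8. Then μ{(x, u, y) : F(T(z)) = y for all z with dist_∞(z, x) ≤ ε} ≥ μ{(x, u, y) : F(Ĝ(u)) = y} ≥ inf_G μ{(x, u, y) : F(G(u)) = y}, where Ĝ is the coordinatewise map sending c*_i to c_i and the infimum is over all ν-code perturbations G. -/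
/- A pixel within `Γ/8` of `cs i` stays within `Γ/8 + ε` of it after an `ε`-attack, and
`2 (Γ/8 + 5ν) + 2ν < Γ` exactly when `16ν < Γ`; at that distance the nearest approximate
codeword must be `c i`, since any other `c j` lies within `ν` of a codeword `Γ` away from
`cs i`. Hence, almost surely, `T` maps every attacked image to `Ĝ u`, and `Ĝ` is itself a
`ν`-code perturbation. -/

open MeasureTheory

/-- A `ν`-code perturbation for ground-truth codewords `cs`: a map `G : X^d → X^d` that acts
coordinatewise on tuples whose entries are among the `cs idx`, replacing each occurrence of
`cs idx` by a fixed point `c' idx` with `dist (c' idx) (cs idx) ≤ ν`. -/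
def IsNuCodePerturbation {X : Type*} [MetricSpace X] {d k : ℕ}
    (cs : Fin k → X) (ν : ℝ) (G : (Fin d → X) → Fin d → X) : Prop :=
  ∃ c' : Fin k → X, (∀ i : Fin k, dist (c' i) (cs i) ≤ ν) ∧
    ∀ u : Fin d → X, (∀ i : Fin d, ∃ idx : Fin k, u i = cs idx) →
      ∀ (i : Fin d) (idx : Fin k), u i = cs idx → G u i = c' idx

section NearestCode

variable {X : Type*} [PseudoMetricSpace X] {k : ℕ} {cs c : Fin k → X} {Γ ν : ℝ}

theorem eq_of_nearest_codeword_of_dist_le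
    (hsep : ∀ i j : Fin k, i ≠ j → Γ ≤ dist (cs i) (cs j))
    (happrox : ∀ i : Fin k, dist (c i) (cs i) ≤ ν)
    {p : X} {i j : Fin k} {r : ℝ} (hnear : dist p (c j) ≤ dist p (c i))
    (hp : dist p (cs i) ≤ r) (hr : 2 * r + 2 * ν < Γ) : j = i := by
  by_contra hji
  have hpj : dist p (c j) ≤ r + ν :=
    hnear.trans <| (dist_triangle p (cs i) (c i)).trans <|
      add_le_add hp (by rw [dist_comm]; exact happrox i)
  have hij : dist (cs i) (cs j) ≤ dist (cs i) p + dist p (c j) + dist (c j) (cs j) :=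
    dist_triangle4 _ _ _ _
  linarith [hsep i j (Ne.symm hji), happrox j, dist_comm p (cs i)]

theorem nearestCode_eq_of_dist_le
    (hsep : ∀ i j : Fin k, i ≠ j → Γ ≤ dist (cs i) (cs j))
    (happrox : ∀ i : Fin k, dist (c i) (cs i) ≤ ν)
    {t : X → X} (ht_mem : ∀ p : X, ∃ i : Fin k, t p = c i)
    (ht_near : ∀ (p : X) (i : Fin k), dist p (t p) ≤ dist p (c i))
    {p : X} {i : Fin k} {r : ℝ} (hp : dist p (cs i) ≤ r) (hr : 2 * r + 2 * ν < Γ) :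
    t p = c i := by
  obtain ⟨j, hj⟩ := ht_mem p
  rw [hj, eq_of_nearest_codeword_of_dist_le hsep happrox (hj ▸ ht_near p i :) hp hr]

theorem preprocessor_eq_of_dist_le {d : ℕ}
    (hsep : ∀ i j : Fin k, i ≠ j → Γ ≤ dist (cs i) (cs j))
    (happrox : ∀ i : Fin k, dist (c i) (cs i) ≤ ν)
    {t : X → X} (ht_mem : ∀ p : X, ∃ i : Fin k, t p = c i)
    (ht_near : ∀ (p : X) (i : Fin k), dist p (t p) ≤ dist p (c i))
    {T : (Fin d → X) → Fin d → X} (hT : ∀ z i, T z i = t (z i))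
    {Ghat : (Fin d → X) → Fin d → X}
    (hGhat : ∀ (w : Fin d → X) (i : Fin d) (idx : Fin k), w i = cs idx → Ghat w i = c idx)
    {x u z : Fin d → X} {δ ε : ℝ}
    (hu : ∀ i : Fin d, (∃ idx : Fin k, u i = cs idx) ∧ dist (x i) (u i) ≤ δ)
    (hz : dist z x ≤ ε) (hr : 2 * (ε + δ) + 2 * ν < Γ) :
    T z = Ghat u := by
  funext i
  obtain ⟨⟨idx, hidx⟩, hxu⟩ := hu i
  rw [hT, hGhat u i idx hidx]
  refine nearestCode_eq_of_dist_le hsep happrox ht_mem ht_near ?_ hr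
  calc dist (z i) (cs idx) ≤ dist (z i) (x i) + dist (x i) (u i) := hidx ▸ dist_triangle _ _ _
    _ ≤ ε + δ := add_le_add ((dist_le_pi_dist z x i).trans hz) hxu

end NearestCode

theorem isNuCodePerturbation_of_map_codeword {X : Type*} [MetricSpace X] {d k : ℕ}
    {cs c : Fin k → X} {ν : ℝ} (happrox : ∀ i : Fin k, dist (c i) (cs i) ≤ ν)
    {Ghat : (Fin d → X) → Fin d → X}
    (hGhat : ∀ (w : Fin d → X) (i : Fin d) (idx : Fin k), w i = cs idx → Ghat w i = c idx) :
    IsNuCodePerturbation cs ν Ghat :=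
  ⟨c, happrox, fun u _ => hGhat u⟩

theorem robustness_boost_with_approximate_codewords_general
    {X Y : Type*} [MetricSpace X] [MeasurableSpace X] [MeasurableSpace Y] {d k : ℕ}
    (cs c : Fin k → X)
    (Γ ν : ℝ) (hΓ : 16 * ν < Γ)
    (hsep : ∀ i j : Fin k, i ≠ j → Γ ≤ dist (cs i) (cs j))
    (happrox : ∀ i : Fin k, dist (c i) (cs i) ≤ ν)
    (t : X → X) (ht_mem : ∀ p : X, ∃ i : Fin k, t p = c i)
    (ht_near : ∀ (p : X) (i : Fin k), dist p (t p) ≤ dist p (c i))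
    (T : (Fin d → X) → Fin d → X) (hT : ∀ z i, T z i = t (z i))
    (F : (Fin d → X) → Y)
    (ε : ℝ) (hε : ε ≤ 5 * ν)
    (μ : Measure ((Fin d → X) × (Fin d → X) × Y))
    (has : ∀ᵐ q ∂μ, ∀ i : Fin d,
      (∃ idx : Fin k, q.2.1 i = cs idx) ∧ dist (q.1 i) (q.2.1 i) ≤ Γ / 8)
    (Ghat : (Fin d → X) → Fin d → X)
    (hGhat : ∀ (w : Fin d → X) (i : Fin d) (idx : Fin k), w i = cs idx → Ghat w i = c idx) :
    μ {q : (Fin d → X) × (Fin d → X) × Y |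
        ∀ z : Fin d → X, dist z q.1 ≤ ε → F (T z) = q.2.2}
      ≥ μ {q : (Fin d → X) × (Fin d → X) × Y | F (Ghat q.2.1) = q.2.2}
    ∧ μ {q : (Fin d → X) × (Fin d → X) × Y | F (Ghat q.2.1) = q.2.2}
      ≥ ⨅ G : {G : (Fin d → X) → Fin d → X // IsNuCodePerturbation cs ν G},
          μ {q : (Fin d → X) × (Fin d → X) × Y | F (G.1 q.2.1) = q.2.2} := by
  refine ⟨measure_mono_ae ?_,
    iInf_le_of_le ⟨Ghat, isNuCodePerturbation_of_map_codeword happrox hGhat⟩ le_rfl⟩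
  filter_upwards [has] with q hq hF z hz
  rwa [preprocessor_eq_of_dist_le hsep happrox ht_mem ht_near hT hGhat hq hz (by linarith)]

/-- **Proposition 1: robustness boost with approximate codewords.** Under the
idealized model (skeleton entries among `Γ`-separated ground-truth codewords `cs`, pixels
within `Γ/8` of the skeleton, `μ`-almost surely), a `ν`-approximation codebook `c` with
`Γ > 16ν`, the coordinatewise nearest-code preprocessor `T`, and any `0 ≤ ε ≤ 5ν`:
the robustness accuracy of `F ∘ T` is at least the accuracy of `F ∘ Ĝ` on skeletons, which is
at least the infimum over all `ν`-code perturbations `G` of the accuracy of `F ∘ G`. -/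
theorem robustness_boost_with_approximate_codewords
    {X Y : Type*} [MetricSpace X] [MeasurableSpace X] [MeasurableSpace Y] {d k : ℕ}
    (cs c : Fin k → X)
    (Γ ν : ℝ) (hν : 0 ≤ ν) (hΓ : 16 * ν < Γ)
    (hsep : ∀ i j : Fin k, i ≠ j → Γ ≤ dist (cs i) (cs j))
    (happrox : ∀ i : Fin k, dist (c i) (cs i) ≤ ν)
    (t : X → X) (ht_mem : ∀ p : X, ∃ i : Fin k, t p = c i)
    (ht_near : ∀ (p : X) (i : Fin k), dist p (t p) ≤ dist p (c i))
    (T : (Fin d → X) → Fin d → X) (hT : ∀ z i, T z i = t (z i))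
    (F : (Fin d → X) → Y)
    (ε : ℝ) (hε0 : 0 ≤ ε) (hε : ε ≤ 5 * ν)
    (μ : Measure ((Fin d → X) × (Fin d → X) × Y)) [IsProbabilityMeasure μ]
    (has : ∀ᵐ q ∂μ, ∀ i : Fin d,
      (∃ idx : Fin k, q.2.1 i = cs idx) ∧ dist (q.1 i) (q.2.1 i) ≤ Γ / 8)
    (Ghat : (Fin d → X) → Fin d → X)
    (hGhat : ∀ (w : Fin d → X) (i : Fin d) (idx : Fin k), w i = cs idx → Ghat w i = c idx)
    (hmeasR : MeasurableSet {q : (Fin d → X) × (Fin d → X) × Y |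
      ∀ z : Fin d → X, dist z q.1 ≤ ε → F (T z) = q.2.2})
    (hmeasG : MeasurableSet {q : (Fin d → X) × (Fin d → X) × Y | F (Ghat q.2.1) = q.2.2}) :
    μ {q : (Fin d → X) × (Fin d → X) × Y |
        ∀ z : Fin d → X, dist z q.1 ≤ ε → F (T z) = q.2.2}
      ≥ μ {q : (Fin d → X) × (Fin d → X) × Y | F (Ghat q.2.1) = q.2.2}
    ∧ μ {q : (Fin d → X) × (Fin d → X) × Y | F (Ghat q.2.1) = q.2.2}
      ≥ ⨅ G : {G : (Fin d → X) → Fin d → X // IsNuCodePerturbation cs ν G},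
          μ {q : (Fin d → X) × (Fin d → X) × Y | F (G.1 q.2.1) = q.2.2} :=
  robustness_boost_with_approximate_codewords_general cs c Γ ν hΓ hsep happrox t ht_mem ht_near T hT
    F ε hε μ has Ghat hGhat
end

section
/- (Deterministic correctness of greedy codeword selection.) Let V be a finite subset of a metric space X, h : V → ℝ, ν > 0, and let c*₁, …, c*ₖ be distinct elements of V with dist(c*_i, c*_j) ≥ Γ for all i ≠ j, where Γ > 16ν. Suppose that for every v ∈ V with dist(v, c*_j) ≥ ν for all j, one has h(v) < h(c*_i) for every i. Then: (1) for every greedy selection with removal radius 2ν, at each step t ∈ {1, …, k} the remaining set V_t is nonempty; and (2) every greedy selection c₁, …, cₖ of length k with removal radius 2ν admits a permutation π of {1, …, k} such that dist(c_t, c*_{π(t)}) < ν for every t. -/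
/-!
Each selected point `c t` lies within `ν` of some codeword, by induction on `t`: the earlier
points are `ν`-close to at most `t < k` codewords, so some codeword `c*_i` is untouched, and by
`Γ`-separation it is more than `Γ - ν ≥ 2ν` away from every earlier point. Hence `c*_i` is still
available at step `t`, so `h (c*_i) ≤ h (c t)`, which the hypothesis on `h` forbids if `c t` is
`ν`-far from all codewords. Points of a greedy selection are more than `2ν` apart, so no codeword
serves two of them; for a selection of length `k` the matching is therefore a permutation.
-/

/-- A sequence `c 0, …, c (m-1)` of points is a *greedy selection* from the finite set `V`
with weight function `h` and removal radius `r`: at each step `s`, `c s` belongs to the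
remaining set `V_s = {v ∈ V : dist v (c s') > r for all s' < s}` and maximizes `h` over it. -/
def GreedySelection {X : Type*} [MetricSpace X] (V : Finset X) (h : X → ℝ) (r : ℝ)
    {m : ℕ} (c : Fin m → X) : Prop :=
  ∀ s : Fin m,
    (c s ∈ V ∧ ∀ s' : Fin m, s' < s → r < dist (c s) (c s')) ∧
    (∀ v ∈ V, (∀ s' : Fin m, s' < s → r < dist v (c s')) → h v ≤ h (c s))

section Matching

variable {X ι κ : Type*} [PseudoMetricSpace X] {ν : ℝ}

theorem injective_of_dist_lt_of_pairwise {p : ι → X} {q : κ → X} {j : ι → κ}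
    (hp : Pairwise fun s t => 2 * ν < dist (p s) (p t)) (hj : ∀ s, dist (p s) (q (j s)) < ν) :
    Function.Injective j := by
  intro s t hst
  by_contra hne
  have := dist_triangle_right (p s) (p t) (q (j s))
  linarith [hp hne, hj s, hj t, hst ▸ hj t]

theorem exists_forall_lt_dist_of_card_lt [Fintype ι] [Fintype κ] {Γ : ℝ} {q : κ → X}
    (hsep : ∀ i i', i ≠ i' → Γ ≤ dist (q i) (q i')) (hcard : Fintype.card ι < Fintype.card κ)
    {p : ι → X} {j : ι → κ} (hj : ∀ s, dist (p s) (q (j s)) < ν) :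
    ∃ i, ∀ s, Γ - ν < dist (q i) (p s) := by
  obtain ⟨i, hi⟩ : ∃ i, ∀ s, j s ≠ i := by
    by_contra! hsurj
    exact hcard.not_ge (Fintype.card_le_of_surjective j hsurj)
  refine ⟨i, fun s => ?_⟩
  have := dist_triangle (q i) (p s) (q (j s))
  linarith [hsep i (j s) (hi s).symm, hj s]

end Matching

namespace GreedySelection

variable {X : Type*} [MetricSpace X] {V : Finset X} {h : X → ℝ} {r : ℝ}

theorem pairwise_lt_dist {m : ℕ} {c : Fin m → X} (hc : GreedySelection V h r c) :
    Pairwise fun s t => r < dist (c s) (c t) := by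
  intro s t hst
  rcases hst.lt_or_gt with hlt | hlt
  · exact dist_comm (c s) (c t) ▸ (hc t).1.2 s hlt
  · exact (hc s).1.2 t hlt

theorem init {m : ℕ} {c : Fin (m + 1) → X} (hc : GreedySelection V h r c) :
    GreedySelection V h r (Fin.init c) := fun s =>
  ⟨⟨(hc s.castSucc).1.1, fun s' hs' => (hc s.castSucc).1.2 s'.castSucc hs'⟩,
    fun v hv hfar => (hc s.castSucc).2 v hv fun s' hs' => by
      simpa [Fin.init] using hfar (s'.castLT (hs'.trans s.castSucc_lt_last)) hs'⟩

theorem le_last {m : ℕ} {c : Fin (m + 1) → X} (hc : GreedySelection V h r c) {v : X}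
    (hv : v ∈ V) (hfar : ∀ s : Fin m, r < dist v (c s.castSucc)) : h v ≤ h (c (Fin.last m)) :=
  (hc _).2 v hv fun s' hs' => by simpa using hfar (s'.castLT hs')

variable {ν Γ : ℝ} {k : ℕ} {cs : Fin k → X}

theorem exists_dist_lt (hΓ : 3 * ν ≤ Γ) (hmem : ∀ i, cs i ∈ V)
    (hsep : ∀ i j : Fin k, i ≠ j → Γ ≤ dist (cs i) (cs j))
    (hfar : ∀ v ∈ V, (∀ j : Fin k, ν ≤ dist v (cs j)) → ∀ i : Fin k, h v < h (cs i)) :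
    ∀ {m : ℕ}, m ≤ k → ∀ {c : Fin m → X}, GreedySelection V h (2 * ν) c →
      ∀ t, ∃ i, dist (c t) (cs i) < ν := by
  intro m
  induction m with
  | zero => exact fun _ _ _ t => t.elim0
  | succ m ih =>
    intro hm c hc
    have hinit := ih (by omega) hc.init
    choose j hj using hinit
    obtain ⟨i, hi⟩ := exists_forall_lt_dist_of_card_lt hsep
      (by simpa using hm : Fintype.card (Fin m) < Fintype.card (Fin k)) hj
    have hlast : ∃ i, dist (c (Fin.last m)) (cs i) < ν := by
      by_contra! hνfar
      have hle := hc.le_last (hmem i) fun s => (hi s).trans_le' (by linarith)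
      linarith [hfar _ (hc _).1.1 hνfar i]
    exact Fin.lastCases hlast fun s => ⟨j s, hj s⟩

theorem exists_injective_dist_lt (hΓ : 3 * ν ≤ Γ) (hmem : ∀ i, cs i ∈ V)
    (hsep : ∀ i j : Fin k, i ≠ j → Γ ≤ dist (cs i) (cs j))
    (hfar : ∀ v ∈ V, (∀ j : Fin k, ν ≤ dist v (cs j)) → ∀ i : Fin k, h v < h (cs i))
    {m : ℕ} (hm : m ≤ k) {c : Fin m → X} (hc : GreedySelection V h (2 * ν) c) :
    ∃ j : Fin m → Fin k, Function.Injective j ∧ ∀ t, dist (c t) (cs (j t)) < ν := by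
  choose j hj using exists_dist_lt hΓ hmem hsep hfar hm hc
  exact ⟨j, injective_of_dist_lt_of_pairwise hc.pairwise_lt_dist hj, hj⟩

end GreedySelection

theorem greedy_codeword_selection_correct_general
    {X : Type*} [MetricSpace X] (V : Finset X) (h : X → ℝ)
    (ν Γ : ℝ) (hν : 0 < ν) (hΓ : 16 * ν < Γ)
    {k : ℕ} (cs : Fin k → X) (hmem : ∀ i : Fin k, cs i ∈ V)
    (hsep : ∀ i j : Fin k, i ≠ j → Γ ≤ dist (cs i) (cs j))
    (hfar : ∀ v ∈ V, (∀ j : Fin k, ν ≤ dist v (cs j)) → ∀ i : Fin k, h v < h (cs i)) :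
    (∀ m : ℕ, m < k → ∀ c : Fin m → X, GreedySelection V h (2 * ν) c →
      ∃ v ∈ V, ∀ s : Fin m, 2 * ν < dist v (c s)) ∧
    (∀ c : Fin k → X, GreedySelection V h (2 * ν) c →
      ∃ π : Equiv.Perm (Fin k), ∀ t : Fin k, dist (c t) (cs (π t)) < ν) := by
  have h3Γ : 3 * ν ≤ Γ := by linarith
  refine ⟨fun m hm c hc => ?_, fun c hc => ?_⟩
  · choose j hj using hc.exists_dist_lt h3Γ hmem hsep hfar hm.le
    obtain ⟨i, hi⟩ := exists_forall_lt_dist_of_card_lt hsep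
      (by simpa using hm : Fintype.card (Fin m) < Fintype.card (Fin k)) hj
    exact ⟨cs i, hmem i, fun s => by linarith [hi s]⟩
  · obtain ⟨j, hjinj, hj⟩ := hc.exists_injective_dist_lt h3Γ hmem hsep hfar le_rfl
    exact ⟨Equiv.ofBijective j (Finite.injective_iff_bijective.mp hjinj), hj⟩

/-- **Deterministic correctness of greedy codeword selection.** Let `V` be
finite, `h : V → ℝ`, `ν > 0`, and `c*₁, …, c*ₖ ∈ V` distinct and pairwise `Γ`-separated with
`Γ > 16ν`; suppose every `v ∈ V` that is `ν`-far from all `c*_j` satisfies `h v < h (c*_i)`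
for all `i`. Then (1) every greedy selection (removal radius `2ν`) of length `< k` leaves a
nonempty remaining set, and (2) every greedy selection of length `k` matches the ground-truth
codewords up to a permutation `π`, with `dist (c_t) (c*_{π t}) < ν` for every `t`. -/
theorem greedy_codeword_selection_correct
    {X : Type*} [MetricSpace X] (V : Finset X) (h : X → ℝ)
    (ν Γ : ℝ) (hν : 0 < ν) (hΓ : 16 * ν < Γ)
    {k : ℕ} (cs : Fin k → X) (hmem : ∀ i : Fin k, cs i ∈ V)
    (hinj : Function.Injective cs)
    (hsep : ∀ i j : Fin k, i ≠ j → Γ ≤ dist (cs i) (cs j))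
    (hfar : ∀ v ∈ V, (∀ j : Fin k, ν ≤ dist v (cs j)) → ∀ i : Fin k, h v < h (cs i)) :
    (∀ m : ℕ, m < k → ∀ c : Fin m → X, GreedySelection V h (2 * ν) c →
      ∃ v ∈ V, ∀ s : Fin m, 2 * ν < dist v (c s)) ∧
    (∀ c : Fin k → X, GreedySelection V h (2 * ν) c →
      ∃ π : Equiv.Perm (Fin k), ∀ t : Fin k, dist (c t) (cs (π t)) < ν) :=
  greedy_codeword_selection_correct_general V h ν Γ hν hΓ cs hmem hsep hfar
end

section
/- (Lemma 1: greedy density-based codeword construction recovers ground-truth codewords.) Let V be a finite subset of a metric space X with |V| = M ≥ 2, and let X₁, …, X_N be i.i.d. V-valued random variables (pixels) with distribution p. Let c*₁, …, c*ₖ ∈ V be distinct with dist(c*_i, c*_j) ≥ Γ for i ≠ j, let ν > 0 with Γ > 16ν, and let α, σ > 0 and δ ∈ (0, 1] be such that: p(c*_i) ≥ α/k for every i; p(v) ≤ α·exp(−ν²/σ²) for every v ∈ V with dist(v, c*_j) ≥ ν for all j; and α/k − γ > α·exp(−ν²/σ²) + γ, where γ = √((4/N)·log(M/δ)). Let h :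 V → ℝ be the empirical frequency h(v) = (1/N)·#{i : X_i = v}. Then with probability at least 1 − δ, every greedy selection c₁, …, cₖ of length k with removal radius 2ν with respect to h admits a permutation π of {1, …, k} such that dist(c_t, c*_{π(t)}) ≤ ν for every t. -/
/-!
With `γ = √((4/N)·log(M/δ))`, Hoeffding's inequality for the indicators `𝟙{Xᵢ = v}` and a
union bound over `V` show that, with probability at least `1 - δ`, the empirical frequency is
within `γ` of `p` on all of `V`. The gap condition then makes every ground-truth codeword
strictly heavier than every point that is `ν`-far from all codewords. On this event the greedy
picks are matched to codewords by induction: the picks made before step `t` are `ν`-close to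
at most `t < k` codewords, and any other codeword is more than `2ν` away from all of them, so
it is still available at step `t`; hence the pick at step `t` cannot be `ν`-far from all
codewords. Picks are `2ν`-apart, so distinct picks are matched to distinct codewords.
-/

open MeasureTheory
open scoped Classical

open ProbabilityTheory
open scoped NNReal

section Greedy

variable {X : Type*} [MetricSpace X] {k : ℕ}

def CodewordsDominate (V : Finset X) (h : X → ℝ) (cs : Fin k → X) (ν : ℝ) : Prop :=
  ∀ i, ∀ v ∈ V, (∀ j, ν ≤ dist v (cs j)) → h v < h (cs i)

lemma CodewordsDominate.of_abs_sub_lt {V : Finset X} {cs : Fin k → X} {ν : ℝ}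
    (hcs : ∀ i, cs i ∈ V) {p h : X → ℝ} {a B γ : ℝ} (hh : ∀ v ∈ V, |h v - p v| < γ)
    (hp_cs : ∀ i, a ≤ p (cs i)) (hp_far : ∀ v ∈ V, (∀ j, ν ≤ dist v (cs j)) → p v ≤ B)
    (hgap : B + γ < a - γ) :
    CodewordsDominate V h cs ν := fun i v hv hfar => by
  have hv' := abs_sub_lt_iff.mp (hh v hv)
  have hi := abs_sub_lt_iff.mp (hh (cs i) (hcs i))
  linarith [hp_cs i, hp_far v hv hfar]

lemma Fin.exists_forall_ne_of_lt {t : Fin k} (J : ∀ s : Fin k, s < t → Fin k) :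
    ∃ j, ∀ s (hs : s < t), J s hs ≠ j := by
  let g : Fin t → Fin k := fun s => J (Fin.castLE t.is_lt.le s) s.is_lt
  have hg : ¬ Function.Surjective g := fun hg => by
    have := Fintype.card_le_of_surjective g hg
    simp only [Fintype.card_fin] at this
    exact t.is_lt.not_ge this
  obtain ⟨j, hj⟩ := not_forall.mp hg
  exact ⟨j, fun s hs hsj => hj ⟨⟨s, hs⟩, hsj⟩⟩

lemma exists_dist_gt_of_forall_lt_exists_dist_le (cs : Fin k → X) {ν Γ : ℝ} (hΓ : 3 * ν < Γ)
    (hsep : ∀ i j : Fin k, i ≠ j → Γ ≤ dist (cs i) (cs j)) (c : Fin k → X) (t : Fin k)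
    (hnear : ∀ s < t, ∃ j, dist (c s) (cs j) ≤ ν) :
    ∃ j, ∀ s < t, 2 * ν < dist (cs j) (c s) := by
  choose J hJ using hnear
  obtain ⟨j, hj⟩ := Fin.exists_forall_ne_of_lt J
  refine ⟨j, fun s hs => ?_⟩
  have := hsep j (J s hs) (hj s hs).symm
  have := dist_triangle (cs j) (c s) (cs (J s hs))
  linarith [hJ s hs]

namespace GreedySelection

variable {V : Finset X} {h : X → ℝ} {c : Fin k → X}

lemma lt_dist {r : ℝ} (hc : GreedySelection V h r c) {s t : Fin k} (hst : s ≠ t) :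
    r < dist (c s) (c t) := by
  rcases hst.lt_or_gt with hlt | hlt
  · exact dist_comm (c s) (c t) ▸ (hc t).1.2 s hlt
  · exact (hc s).1.2 t hlt

variable {cs : Fin k → X} {ν Γ : ℝ}

lemma exists_dist_le (hc : GreedySelection V h (2 * ν) c) (hcs : ∀ i, cs i ∈ V)
    (hΓ : 3 * ν < Γ) (hsep : ∀ i j : Fin k, i ≠ j → Γ ≤ dist (cs i) (cs j))
    (hdom : CodewordsDominate V h cs ν) (t : Fin k) :
    ∃ j, dist (c t) (cs j) ≤ ν := by
  induction t using WellFoundedLT.induction with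
  | ind t ih =>
  obtain ⟨j, hj⟩ := exists_dist_gt_of_forall_lt_exists_dist_le cs hΓ hsep c t ih
  by_contra! hfar
  exact (hdom j (c t) (hc t).1.1 fun j' => (hfar j').le).not_ge ((hc t).2 (cs j) (hcs j) hj)

lemma exists_perm_dist_le (hc : GreedySelection V h (2 * ν) c) (hcs : ∀ i, cs i ∈ V)
    (hΓ : 3 * ν < Γ) (hsep : ∀ i j : Fin k, i ≠ j → Γ ≤ dist (cs i) (cs j))
    (hdom : CodewordsDominate V h cs ν) :
    ∃ π : Equiv.Perm (Fin k), ∀ t, dist (c t) (cs (π t)) ≤ ν := by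
  choose J hJ using hc.exists_dist_le hcs hΓ hsep hdom
  have hJ_inj : Function.Injective J := fun s t hst => by
    by_contra hne
    have := hc.lt_dist hne
    have := dist_triangle_right (c s) (c t) (cs (J t))
    linarith [hJ t, hst ▸ hJ s]
  exact ⟨Equiv.ofBijective J (Finite.injective_iff_bijective.mp hJ_inj), hJ⟩

end GreedySelection

end Greedy

section Concentration

open Real

lemma ProbabilityTheory.HasSubgaussianMGF.measureReal_abs_ge_le {Ω : Type*}
    [MeasurableSpace Ω] {μ : Measure Ω} [IsFiniteMeasure μ] {Y : Ω → ℝ} {c : ℝ≥0}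
    (h : HasSubgaussianMGF Y c μ) {ε : ℝ} (hε : 0 ≤ ε) :
    μ.real {ω | ε ≤ |Y ω|} ≤ 2 * exp (-ε ^ 2 / (2 * c)) := by
  have hsplit : {ω | ε ≤ |Y ω|} = {ω | ε ≤ Y ω} ∪ {ω | ε ≤ (-Y) ω} := by
    ext ω
    simp only [le_abs', Set.mem_ofPred_eq, Set.mem_union, Pi.neg_apply, le_neg]
    tauto
  calc μ.real {ω | ε ≤ |Y ω|}
      ≤ μ.real {ω | ε ≤ Y ω} + μ.real {ω | ε ≤ (-Y) ω} := hsplit ▸ measureReal_union_le _ _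
    _ ≤ exp (-ε ^ 2 / (2 * c)) + exp (-ε ^ 2 / (2 * c)) :=
        add_le_add (h.measure_ge_le hε) (h.neg.measure_ge_le hε)
    _ = 2 * exp (-ε ^ 2 / (2 * c)) := by ring

variable {X Ω : Type*} [MeasurableSpace X] [MeasurableSingletonClass X] [MeasurableSpace Ω]
  {P : Measure Ω} [IsProbabilityMeasure P] {μX : Measure X}

noncomputable def empiricalFreq {N : ℕ} (x : Fin N → X) (v : X) : ℝ :=
  ((Finset.univ.filter (fun i => x i = v)).card : ℝ) / N

lemma hasSubgaussianMGF_indicator_preimage_sub {Y : Ω → X} (hY : Measurable Y)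
    (hlaw : P.map Y = μX) (v : X) :
    HasSubgaussianMGF (fun ω => (Y ⁻¹' {v}).indicator 1 ω - μX.real {v}) (1 / 4) P := by
  have hYv : MeasurableSet (Y ⁻¹' {v}) := hY (measurableSet_singleton v)
  have hmean : P[(Y ⁻¹' {v}).indicator 1] = μX.real {v} := by
    rw [integral_indicator_one hYv, ← hlaw, map_measureReal_apply hY (measurableSet_singleton v)]
  have h := hasSubgaussianMGF_of_mem_Icc (μ := P) (X := (Y ⁻¹' {v}).indicator 1)
    (a := 0) (b := 1) (measurable_const.indicator hYv).aemeasurable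
    (ae_of_all _ fun ω => by by_cases hω : ω ∈ Y ⁻¹' {v} <;> simp [hω])
  rw [hmean] at h
  convert h using 1
  norm_num

variable {N : ℕ} {Xs : Fin N → Ω → X}

lemma measureReal_le_abs_empiricalFreq_sub_le (hN : 0 < N) (hmeas : ∀ i, Measurable (Xs i))
    (hlaw : ∀ i, P.map (Xs i) = μX) (hindep : iIndepFun Xs P) (v : X) {ε : ℝ} (hε : 0 ≤ ε) :
    P.real {ω | ε ≤ |empiricalFreq (fun i => Xs i ω) v - μX.real {v}|}
      ≤ 2 * exp (-2 * N * ε ^ 2) := by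
  set Y : Fin N → Ω → ℝ := fun i ω => (Xs i ⁻¹' {v}).indicator 1 ω - μX.real {v}
  have hY_indep : iIndepFun Y P :=
    hindep.comp (fun _ x => ({v} : Set X).indicator 1 x - μX.real {v})
      fun _ => (measurable_const.indicator (measurableSet_singleton v)).sub_const _
  have hY : HasSubgaussianMGF (fun ω => ∑ i, Y i ω) (∑ _i : Fin N, 1 / 4) P :=
    HasSubgaussianMGF.sum_of_iIndepFun hY_indep
      fun i _ => hasSubgaussianMGF_indicator_preimage_sub (hmeas i) (hlaw i) v
  have hN' : (0 : ℝ) < N := Nat.cast_pos.mpr hN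
  have hsum : ∀ ω, ∑ i, Y i ω = N * (empiricalFreq (fun i => Xs i ω) v - μX.real {v}) := by
    intro ω
    simp only [Y, empiricalFreq, Set.indicator_apply, Set.mem_preimage, Set.mem_singleton_iff,
      Pi.one_apply, Finset.sum_sub_distrib, Finset.sum_boole, Finset.sum_const, Finset.card_univ,
      Fintype.card_fin, nsmul_eq_mul]
    field_simp
  have hset : {ω | ε ≤ |empiricalFreq (fun i => Xs i ω) v - μX.real {v}|}
      = {ω | N * ε ≤ |∑ i, Y i ω|} := by
    ext ω
    simp [hsum, abs_mul, abs_of_pos hN', mul_le_mul_iff_right₀ hN']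
  rw [hset]
  refine (hY.measureReal_abs_ge_le (ε := N * ε) (by positivity)).trans_eq ?_
  congr 2
  simp only [Finset.sum_const, Finset.card_univ, Fintype.card_fin, nsmul_eq_mul]
  push_cast
  field_simp
  ring

lemma measureReal_exists_le_abs_empiricalFreq_sub_le (hN : 0 < N)
    (hmeas : ∀ i, Measurable (Xs i)) (hlaw : ∀ i, P.map (Xs i) = μX) (hindep : iIndepFun Xs P)
    (V : Finset X) {ε : ℝ} (hε : 0 ≤ ε) :
    P.real {ω | ∃ v ∈ V, ε ≤ |empiricalFreq (fun i => Xs i ω) v - μX.real {v}|}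
      ≤ V.card * (2 * exp (-2 * N * ε ^ 2)) := by
  have hset : {ω | ∃ v ∈ V, ε ≤ |empiricalFreq (fun i => Xs i ω) v - μX.real {v}|}
      = ⋃ v ∈ V, {ω | ε ≤ |empiricalFreq (fun i => Xs i ω) v - μX.real {v}|} := by
    ext ω
    simp
  rw [hset]
  calc _ ≤ ∑ v ∈ V, P.real {ω | ε ≤ |empiricalFreq (fun i => Xs i ω) v - μX.real {v}|} :=
        measureReal_biUnion_finset_le _ _
    _ ≤ ∑ _v ∈ V, 2 * exp (-2 * N * ε ^ 2) := Finset.sum_le_sum fun v _ =>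
        measureReal_le_abs_empiricalFreq_sub_le hN hmeas hlaw hindep v hε
    _ = V.card * (2 * exp (-2 * N * ε ^ 2)) := by
        rw [Finset.sum_const, nsmul_eq_mul]

lemma mul_two_mul_exp_le_of_mul_sq_eq {M δ n γ : ℝ} (hM : 2 ≤ M) (hδ0 : 0 < δ) (hδ1 : δ ≤ 1)
    (hγ : n * γ ^ 2 = 4 * log (M / δ)) :
    M * (2 * exp (-2 * n * γ ^ 2)) ≤ δ := by
  have hL : 0 ≤ log (M / δ) := log_nonneg <| (one_le_div hδ0).mpr (by linarith)
  have hexp : exp (-2 * log (M / δ)) = (δ / M) ^ 2 := by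
    rw [neg_mul, exp_neg, mul_comm, exp_mul, exp_log (by positivity), rpow_two, ← inv_pow,
      inv_div]
  calc M * (2 * exp (-2 * n * γ ^ 2))
      ≤ M * (2 * exp (-2 * log (M / δ))) := by
        have : -2 * n * γ ^ 2 ≤ -2 * log (M / δ) := by linarith
        gcongr
    _ = 2 * δ / M * δ := by
        rw [hexp]
        field_simp
    _ ≤ δ := by
        rw [mul_le_iff_le_one_left hδ0, div_le_one (by linarith)]
        linarith

end Concentration

lemma ENNReal.ofReal_one_sub_le_of_measure_compl_le {Ω : Type*} [MeasurableSpace Ω]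
    {P : Measure Ω} [IsProbabilityMeasure P] {s : Set Ω} {δ : ℝ} (hδ : 0 ≤ δ)
    (hs : P sᶜ ≤ ENNReal.ofReal δ) :
    ENNReal.ofReal (1 - δ) ≤ P s := by
  rw [ENNReal.ofReal_sub 1 hδ, ENNReal.ofReal_one, tsub_le_iff_right, ← measure_univ (μ := P)]
  exact (measure_univ_le_add_compl s).trans (add_le_add le_rfl hs)

theorem greedy_density_codewords_recover_ground_truth_general
    {X : Type*} [MetricSpace X] [MeasurableSpace X] [MeasurableSingletonClass X]
    (V : Finset X) (hM : 2 ≤ V.card)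
    {Ω : Type*} [MeasurableSpace Ω] (P : Measure Ω) [IsProbabilityMeasure P]
    {N : ℕ} (hN : 0 < N)
    (Xs : Fin N → Ω → X) (hmeas : ∀ i, Measurable (Xs i))
    (μX : Measure X)
    (hlaw : ∀ i, Measure.map (Xs i) P = μX)
    (hindep : ProbabilityTheory.iIndepFun Xs P)
    {k : ℕ} (cs : Fin k → X) (hmem : ∀ i : Fin k, cs i ∈ V)
    (ν Γ : ℝ) (hν : 0 < ν) (hΓ : 16 * ν < Γ)
    (hsep : ∀ i j : Fin k, i ≠ j → Γ ≤ dist (cs i) (cs j))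
    (α σ : ℝ)
    (δ : ℝ) (hδ0 : 0 < δ) (hδ1 : δ ≤ 1)
    (hp1 : ∀ i : Fin k, α / k ≤ (μX {cs i}).toReal)
    (hp2 : ∀ v ∈ V, (∀ j : Fin k, ν ≤ dist v (cs j)) →
      (μX {v}).toReal ≤ α * Real.exp (-ν ^ 2 / σ ^ 2))
    (hgap : α * Real.exp (-ν ^ 2 / σ ^ 2) + Real.sqrt ((4 / N) * Real.log (V.card / δ))
      < α / k - Real.sqrt ((4 / N) * Real.log (V.card / δ))) :
    P {ω : Ω | ∀ c : Fin k → X,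
        GreedySelection V
          (fun v => ((Finset.univ.filter (fun i : Fin N => Xs i ω = v)).card : ℝ) / N)
          (2 * ν) c →
        ∃ π : Equiv.Perm (Fin k), ∀ t : Fin k, dist (c t) (cs (π t)) ≤ ν}
      ≥ ENNReal.ofReal (1 - δ) := by
  set γ := Real.sqrt ((4 / N) * Real.log (V.card / δ))
  have hM' : (2 : ℝ) ≤ V.card := by exact_mod_cast hM
  have hγ : (N : ℝ) * γ ^ 2 = 4 * Real.log (V.card / δ) := by
    rw [Real.sq_sqrt (mul_nonneg (by positivity)
      (Real.log_nonneg ((one_le_div hδ0).mpr (by linarith))))]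
    field_simp
  set G := {ω | ∀ v ∈ V, |empiricalFreq (fun i => Xs i ω) v - μX.real {v}| < γ}
  have hG : P Gᶜ ≤ ENNReal.ofReal δ := by
    have hGc : Gᶜ = {ω | ∃ v ∈ V, γ ≤ |empiricalFreq (fun i => Xs i ω) v - μX.real {v}|} := by
      ext ω
      simp [G]
    rw [← ENNReal.ofReal_toReal (measure_ne_top P _)]
    refine ENNReal.ofReal_le_ofReal ?_
    rw [hGc]
    exact (measureReal_exists_le_abs_empiricalFreq_sub_le hN hmeas hlaw hindep V
      (Real.sqrt_nonneg _)).trans (mul_two_mul_exp_le_of_mul_sq_eq hM' hδ0 hδ1 hγ)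
  refine (ENNReal.ofReal_one_sub_le_of_measure_compl_le hδ0.le hG).trans (measure_mono ?_)
  intro ω hω c hc
  exact hc.exists_perm_dist_le hmem (by linarith) hsep
    (CodewordsDominate.of_abs_sub_lt hmem hω hp1 hp2 hgap)

/-- **Lemma 1: greedy density-based codeword construction recovers the
ground-truth codewords.** Pixels `X₁, …, X_N` are i.i.d. `V`-valued with distribution `p`
(formalized as the probability measure `μX`, `p v = μX {v}`). The ground-truth codewords
`c*₁, …, c*ₖ ∈ V` are distinct and pairwise `Γ`-separated with `Γ > 16ν`; `p(c*_i) ≥ α/k`,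
`p(v) ≤ α·exp(−ν²/σ²)` for every `v ∈ V` that is `ν`-far from all `c*_j`, and
`α/k − γ > α·exp(−ν²/σ²) + γ` where `γ = √((4/N)·log(M/δ))`, `M = |V| ≥ 2`. Then with
probability at least `1 − δ`, every greedy selection of length `k` with removal radius `2ν`
w.r.t. the empirical frequency matches the `c*_i` up to a permutation, within distance `ν`. -/
theorem greedy_density_codewords_recover_ground_truth
    {X : Type*} [MetricSpace X] [MeasurableSpace X] [MeasurableSingletonClass X]
    (V : Finset X) (hM : 2 ≤ V.card)
    {Ω : Type*} [MeasurableSpace Ω] (P : Measure Ω) [IsProbabilityMeasure P]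
    {N : ℕ} (hN : 0 < N)
    (Xs : Fin N → Ω → X) (hmeas : ∀ i, Measurable (Xs i))
    (hval : ∀ i ω, Xs i ω ∈ V)
    (μX : Measure X) [IsProbabilityMeasure μX]
    (hlaw : ∀ i, Measure.map (Xs i) P = μX)
    (hindep : ProbabilityTheory.iIndepFun Xs P)
    {k : ℕ} (cs : Fin k → X) (hmem : ∀ i : Fin k, cs i ∈ V)
    (hinj : Function.Injective cs)
    (ν Γ : ℝ) (hν : 0 < ν) (hΓ : 16 * ν < Γ)
    (hsep : ∀ i j : Fin k, i ≠ j → Γ ≤ dist (cs i) (cs j))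
    (α σ : ℝ) (hα : 0 < α) (hσ : 0 < σ)
    (δ : ℝ) (hδ0 : 0 < δ) (hδ1 : δ ≤ 1)
    (hp1 : ∀ i : Fin k, α / k ≤ (μX {cs i}).toReal)
    (hp2 : ∀ v ∈ V, (∀ j : Fin k, ν ≤ dist v (cs j)) →
      (μX {v}).toReal ≤ α * Real.exp (-ν ^ 2 / σ ^ 2))
    (hgap : α * Real.exp (-ν ^ 2 / σ ^ 2) + Real.sqrt ((4 / N) * Real.log (V.card / δ))
      < α / k - Real.sqrt ((4 / N) * Real.log (V.card / δ))) :
    P {ω : Ω | ∀ c : Fin k → X,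
        GreedySelection V
          (fun v => ((Finset.univ.filter (fun i : Fin N => Xs i ω = v)).card : ℝ) / N)
          (2 * ν) c →
        ∃ π : Equiv.Perm (Fin k), ∀ t : Fin k, dist (c t) (cs (π t)) ≤ ν}
      ≥ ENNReal.ofReal (1 - δ) :=
  greedy_density_codewords_recover_ground_truth_general V hM P hN Xs hmeas μX hlaw hindep cs hmem ν
    Γ hν hΓ hsep α σ δ hδ0 hδ1 hp1 hp2 hgap
end
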